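/- Let (H,K) be a match pair of finite groupoids for G and I the operator on ℓ²(G×G) defined by (Iξ)(x,y) = ξ(x·p₁(p₂(x)⁻¹y), p₂(x)⁻¹y) when m(x) = r(y), 0 otherwise. Then I satisfies the pentagonal relation I₁₂I₁₃I₂₃ = I₂₃I₁₂ on ℓ²(G×G×G). -/

import Mathlib

/-!
On composable pairs (`s (p₁ x) = r y`) the operator `I` is the pull-back of functions along
`Φ (x, y) = (x · p₁ V, V)` with `V = p₂(x)⁻¹ y` (`pairMapFst`, `pairMapSnd`), and it vanishes
elsewhere. The pentagon relation for `I` thus amounts to the set-theoretic pentagon equation for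
`Φ` together with the equality of the supports of both sides. Writing `p₂(x)⁻¹ p₁(y) = h k`, one
has `V = h · (k · p₂ y)` and `x · p₁ V = (p₁ x · p₁ y) · k⁻¹`, so uniqueness of the factorization
gives `p₁ (x · p₁ V) = p₁ x · p₁ y` and `p₂ (x · p₁ V) · p₂ V = p₂ y`. The first identity matches
the supports and gives the first component of the pentagon equation, the second identity gives
the third component, and the middle one then follows by associativity.
-/

/-- A (small) groupoid structure on a carrier type `G` of "arrows", with
source map `s`, range map `r`, partial multiplication `mul` (defined when
`s x = r y`) and inversion `inv`.  Units are identified with the elements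
`s x`, `r x`. -/
structure Gpd (G : Type*) where
  s : G → G
  r : G → G
  mul : ∀ x y : G, s x = r y → G
  inv : G → G
  s_mul : ∀ x y h, s (mul x y h) = s y
  r_mul : ∀ x y h, r (mul x y h) = r x
  s_inv : ∀ x, s (inv x) = r x
  r_inv : ∀ x, r (inv x) = s x
  s_s : ∀ x, s (s x) = s x
  r_s : ∀ x, r (s x) = s x
  s_r : ∀ x, s (r x) = r x
  r_r : ∀ x, r (r x) = r x
  mul_source : ∀ x (h : s x = r (s x)), mul x (s x) h = x
  range_mul : ∀ x (h : s (r x) = r x), mul (r x) x h = x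
  mul_inv : ∀ x (h : s x = r (inv x)), mul x (inv x) h = r x
  inv_mul : ∀ x (h : s (inv x) = r x), mul (inv x) x h = s x
  mul_assoc : ∀ x y z (hxy : s x = r y) (hyz : s y = r z)
      (h1 : s (mul x y hxy) = r z) (h2 : s x = r (mul y z hyz)),
      mul (mul x y hxy) z h1 = mul x (mul y z hyz) h2

namespace Gpd

variable {G : Type*} (𝒢 : Gpd G)

/-- The set of units `G⁰` of the groupoid. -/
def units : Set G := {u | 𝒢.r u = u}

/-- A wide subgroupoid: a subset closed under multiplication and inversion and
containing all units. -/
structure IsSubgpd (H : Set G) : Prop where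
  mul_mem : ∀ x y (h : 𝒢.s x = 𝒢.r y), x ∈ H → y ∈ H → 𝒢.mul x y h ∈ H
  inv_mem : ∀ x, x ∈ H → 𝒢.inv x ∈ H
  unit_mem : ∀ u, u ∈ 𝒢.units → u ∈ H

/-- A match pair of subgroupoids `H`, `K` of `G`, together with the projection
maps `p₁ : G → H`, `p₂ : G → K` of the unique factorization `g = p₁ g * p₂ g`. -/
structure MatchPair (H K : Set G) (p₁ p₂ : G → G) : Prop where
  subH : 𝒢.IsSubgpd H
  subK : 𝒢.IsSubgpd K
  inter : H ∩ K ⊆ 𝒢.units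
  p₁_mem : ∀ g, p₁ g ∈ H
  p₂_mem : ∀ g, p₂ g ∈ K
  comp : ∀ g, 𝒢.s (p₁ g) = 𝒢.r (p₂ g)
  decomp : ∀ g, g = 𝒢.mul (p₁ g) (p₂ g) (comp g)
  uniq : ∀ h, h ∈ H → ∀ k, k ∈ K → ∀ hc : 𝒢.s h = 𝒢.r k,
      p₁ (𝒢.mul h k hc) = h ∧ p₂ (𝒢.mul h k hc) = k

theorem MatchPair.s_p₂ {H K : Set G} {p₁ p₂ : G → G}
    (mp : 𝒢.MatchPair H K p₁ p₂) (g : G) : 𝒢.s (p₂ g) = 𝒢.s g := by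
  conv_rhs => rw [mp.decomp g]
  rw [𝒢.s_mul]

theorem MatchPair.r_p₁ {H K : Set G} {p₁ p₂ : G → G}
    (mp : 𝒢.MatchPair H K p₁ p₂) (g : G) : 𝒢.r (p₁ g) = 𝒢.r g := by
  conv_rhs => rw [mp.decomp g]
  rw [𝒢.r_mul]

/-- the left "action" `k ▷ h = p₁ (kh)` -/
def rAct (p₁ : G → G) (k h : G) (hc : 𝒢.s k = 𝒢.r h) : G := p₁ (𝒢.mul k h hc)

/-- the right "action" `k ◁ h = p₂ (kh)` -/
def lAct (p₂ : G → G) (k h : G) (hc : 𝒢.s k = 𝒢.r h) : G := p₂ (𝒢.mul k h hc)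

end Gpd

namespace Gpd

noncomputable section
attribute [local instance] Classical.propDecidable

variable {G : Type*} (𝒢 : Gpd G) {H K : Set G} {p₁ p₂ : G → G}

/-- The leg `I₁₂` of the match pair partial isometry on `ℓ²(G × G × G)`. -/
def IMP12 (mp : 𝒢.MatchPair H K p₁ p₂) : ((G × G × G) → ℂ) → ((G × G × G) → ℂ) :=
  fun ξ p =>
    if hm : 𝒢.s (p₁ p.1) = 𝒢.r p.2.1 then
      have h1 : 𝒢.s (𝒢.inv (p₂ p.1)) = 𝒢.r p.2.1 := by
        rw [𝒢.s_inv, ← mp.comp p.1]; exact hm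
      have h2 : 𝒢.s p.1 = 𝒢.r (p₁ (𝒢.mul (𝒢.inv (p₂ p.1)) p.2.1 h1)) := by
        rw [mp.r_p₁, 𝒢.r_mul, 𝒢.r_inv, mp.s_p₂]
      ξ (𝒢.mul p.1 (p₁ (𝒢.mul (𝒢.inv (p₂ p.1)) p.2.1 h1)) h2,
        𝒢.mul (𝒢.inv (p₂ p.1)) p.2.1 h1, p.2.2)
    else 0

/-- The leg `I₂₃` of the match pair partial isometry on `ℓ²(G × G × G)`. -/
def IMP23 (mp : 𝒢.MatchPair H K p₁ p₂) : ((G × G × G) → ℂ) → ((G × G × G) → ℂ) :=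
  fun ξ p =>
    if hm : 𝒢.s (p₁ p.2.1) = 𝒢.r p.2.2 then
      have h1 : 𝒢.s (𝒢.inv (p₂ p.2.1)) = 𝒢.r p.2.2 := by
        rw [𝒢.s_inv, ← mp.comp p.2.1]; exact hm
      have h2 : 𝒢.s p.2.1 = 𝒢.r (p₁ (𝒢.mul (𝒢.inv (p₂ p.2.1)) p.2.2 h1)) := by
        rw [mp.r_p₁, 𝒢.r_mul, 𝒢.r_inv, mp.s_p₂]
      ξ (p.1, 𝒢.mul p.2.1 (p₁ (𝒢.mul (𝒢.inv (p₂ p.2.1)) p.2.2 h1)) h2,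
        𝒢.mul (𝒢.inv (p₂ p.2.1)) p.2.2 h1)
    else 0

/-- The leg `I₁₃` of the match pair partial isometry on `ℓ²(G × G × G)`. -/
def IMP13 (mp : 𝒢.MatchPair H K p₁ p₂) : ((G × G × G) → ℂ) → ((G × G × G) → ℂ) :=
  fun ξ p =>
    if hm : 𝒢.s (p₁ p.1) = 𝒢.r p.2.2 then
      have h1 : 𝒢.s (𝒢.inv (p₂ p.1)) = 𝒢.r p.2.2 := by
        rw [𝒢.s_inv, ← mp.comp p.1]; exact hm
      have h2 : 𝒢.s p.1 = 𝒢.r (p₁ (𝒢.mul (𝒢.inv (p₂ p.1)) p.2.2 h1)) := by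
        rw [mp.r_p₁, 𝒢.r_mul, 𝒢.r_inv, mp.s_p₂]
      ξ (𝒢.mul p.1 (p₁ (𝒢.mul (𝒢.inv (p₂ p.1)) p.2.2 h1)) h2,
        p.2.1, 𝒢.mul (𝒢.inv (p₂ p.1)) p.2.2 h1)
    else 0

attribute [local simp] s_mul r_mul s_inv r_inv s_s r_s s_r r_r mul_inv inv_mul

-- As a simp lemma this puts products in right-associated normal form, on which the
-- cancellation lemmas below act.
@[simp]
theorem mul_assoc' {x y z : G} (hxy : 𝒢.s x = 𝒢.r y) (h : 𝒢.s (𝒢.mul x y hxy) = 𝒢.r z) :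
    𝒢.mul (𝒢.mul x y hxy) z h =
      𝒢.mul x (𝒢.mul y z (by simpa using h)) (by simpa using hxy) :=
  𝒢.mul_assoc _ _ _ _ _ _ _

@[simp]
theorem mul_unit {x u : G} (hu : 𝒢.r u = u) (h : 𝒢.s x = 𝒢.r u) : 𝒢.mul x u h = x := by
  obtain rfl : u = 𝒢.s x := by rw [h, hu]
  exact 𝒢.mul_source x h

@[simp]
theorem unit_mul {u x : G} (hu : 𝒢.r u = u) (h : 𝒢.s u = 𝒢.r x) : 𝒢.mul u x h = x := by
  obtain rfl : u = 𝒢.r x := by rw [← h, ← hu, s_r]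
  exact 𝒢.range_mul x h

@[simp]
theorem inv_mul_cancel_left {a x : G} (h : 𝒢.s a = 𝒢.r x)
    (h' : 𝒢.s (𝒢.inv a) = 𝒢.r (𝒢.mul a x h)) : 𝒢.mul (𝒢.inv a) (𝒢.mul a x h) h' = x := by
  rw [← 𝒢.mul_assoc _ _ _ (𝒢.s_inv a) h (by simpa using h) h']
  simp

@[simp]
theorem mul_inv_cancel_left {a x : G} (h : 𝒢.s (𝒢.inv a) = 𝒢.r x)
    (h' : 𝒢.s a = 𝒢.r (𝒢.mul (𝒢.inv a) x h)) : 𝒢.mul a (𝒢.mul (𝒢.inv a) x h) h' = x := by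
  rw [← 𝒢.mul_assoc _ _ _ (𝒢.r_inv a).symm h (by simpa using h) h']
  simp

theorem eq_inv_mul_of_mul_eq {a t z : G} {h : 𝒢.s a = 𝒢.r t} (e : 𝒢.mul a t h = z)
    (h' : 𝒢.s (𝒢.inv a) = 𝒢.r z) : t = 𝒢.mul (𝒢.inv a) z h' := by
  subst e; simp

namespace MatchPair

variable {𝒢}

theorem r_p₂ (mp : 𝒢.MatchPair H K p₁ p₂) (g : G) : 𝒢.r (p₂ g) = 𝒢.s (p₁ g) :=
  (mp.comp g).symm

theorem p₁_eq_mul_inv_p₂ (mp : 𝒢.MatchPair H K p₁ p₂) (g : G) :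
    p₁ g = 𝒢.mul g (𝒢.inv (p₂ g)) (by simp [mp.s_p₂]) :=
  calc p₁ g = 𝒢.mul (𝒢.mul (p₁ g) (p₂ g) (mp.comp g)) (𝒢.inv (p₂ g)) (by simp) := by simp
    _ = _ := by congr 1; exact (mp.decomp g).symm

theorem p_mul_of_mem_right (mp : 𝒢.MatchPair H K p₁ p₂) {g k : G} (hk : k ∈ K)
    (hc : 𝒢.s g = 𝒢.r k) :
    p₁ (𝒢.mul g k hc) = p₁ g ∧
      p₂ (𝒢.mul g k hc) = 𝒢.mul (p₂ g) k (by simpa [mp.s_p₂] using hc) := by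
  have e : 𝒢.mul g k hc =
      𝒢.mul (p₁ g) (𝒢.mul (p₂ g) k (by simpa [mp.s_p₂] using hc)) (by simp [mp.r_p₂]) :=
    calc 𝒢.mul g k hc
        = 𝒢.mul (𝒢.mul (p₁ g) (p₂ g) (mp.comp g)) k (by simpa [mp.s_p₂] using hc) := by
          congr 1; exact mp.decomp g
      _ = _ := 𝒢.mul_assoc' ..
  rw [e]
  exact mp.uniq _ (mp.p₁_mem g) _ (mp.subK.mul_mem _ _ _ (mp.p₂_mem g) hk) _

def pairMapSnd (mp : 𝒢.MatchPair H K p₁ p₂) (x y : G) (h : 𝒢.s (p₁ x) = 𝒢.r y) : G :=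
  𝒢.mul (𝒢.inv (p₂ x)) y (by rwa [s_inv, mp.r_p₂])

def pairMapFst (mp : 𝒢.MatchPair H K p₁ p₂) (x y : G) (h : 𝒢.s (p₁ x) = 𝒢.r y) : G :=
  𝒢.mul x (p₁ (mp.pairMapSnd x y h)) (by simp [pairMapSnd, mp.r_p₁, mp.s_p₂])

theorem pairMapSnd_eq_mul (mp : 𝒢.MatchPair H K p₁ p₂) {x y : G} (h : 𝒢.s (p₁ x) = 𝒢.r y) :
    mp.pairMapSnd x y h =
      𝒢.mul (mp.pairMapSnd x (p₁ y) (by rwa [mp.r_p₁])) (p₂ y) (by simp [pairMapSnd, mp.r_p₂]) :=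
  calc mp.pairMapSnd x y h
      = 𝒢.mul (𝒢.inv (p₂ x)) (𝒢.mul (p₁ y) (p₂ y) (mp.comp y))
          (by simpa [mp.r_p₂, mp.r_p₁] using h) := by
        unfold pairMapSnd; congr 1; exact mp.decomp y
    _ = _ := by simp [pairMapSnd]

theorem p_pairMapSnd (mp : 𝒢.MatchPair H K p₁ p₂) {x y : G} (h : 𝒢.s (p₁ x) = 𝒢.r y) :
    p₁ (mp.pairMapSnd x y h) = p₁ (mp.pairMapSnd x (p₁ y) (by rwa [mp.r_p₁])) ∧
      p₂ (mp.pairMapSnd x y h) = 𝒢.mul (p₂ (mp.pairMapSnd x (p₁ y) (by rwa [mp.r_p₁]))) (p₂ y)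
        (by simp [pairMapSnd, mp.s_p₂, mp.r_p₂]) := by
  rw [mp.pairMapSnd_eq_mul h]
  exact mp.p_mul_of_mem_right (mp.p₂_mem y) _

theorem pairMapFst_eq_mul (mp : 𝒢.MatchPair H K p₁ p₂) {x y : G} (h : 𝒢.s (p₁ x) = 𝒢.r y) :
    mp.pairMapFst x y h =
      𝒢.mul (𝒢.mul (p₁ x) (p₁ y) (by rwa [mp.r_p₁]))
        (𝒢.inv (p₂ (mp.pairMapSnd x (p₁ y) (by rwa [mp.r_p₁]))))
        (by simp [pairMapSnd, mp.s_p₂]) := by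
  set D := mp.pairMapSnd x (p₁ y) (by rwa [mp.r_p₁])
  calc mp.pairMapFst x y h
      = 𝒢.mul (𝒢.mul (p₁ x) (p₂ x) (mp.comp x)) (𝒢.mul D (𝒢.inv (p₂ D)) (by simp [mp.s_p₂]))
          (by simp [D, pairMapSnd, mp.s_p₂]) := by
        unfold pairMapFst; congr 1
        · exact mp.decomp x
        · rw [(mp.p_pairMapSnd h).1, mp.p₁_eq_mul_inv_p₂]
    _ = _ := by simp [D, pairMapSnd]

theorem p_pairMapFst (mp : 𝒢.MatchPair H K p₁ p₂) {x y : G} (h : 𝒢.s (p₁ x) = 𝒢.r y) :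
    p₁ (mp.pairMapFst x y h) = 𝒢.mul (p₁ x) (p₁ y) (by rwa [mp.r_p₁]) ∧
      p₂ (mp.pairMapFst x y h) = 𝒢.inv (p₂ (mp.pairMapSnd x (p₁ y) (by rwa [mp.r_p₁]))) := by
  rw [mp.pairMapFst_eq_mul h]
  exact mp.uniq _ (mp.subH.mul_mem _ _ _ (mp.p₁_mem x) (mp.p₁_mem y)) _
    (mp.subK.inv_mem _ (mp.p₂_mem _)) _

theorem r_pairMapSnd (mp : 𝒢.MatchPair H K p₁ p₂) {x y : G} (h : 𝒢.s (p₁ x) = 𝒢.r y) :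
    𝒢.r (mp.pairMapSnd x y h) = 𝒢.s x := by
  simp [pairMapSnd, mp.s_p₂]

theorem r_pairMapFst (mp : 𝒢.MatchPair H K p₁ p₂) {x y : G} (h : 𝒢.s (p₁ x) = 𝒢.r y) :
    𝒢.r (mp.pairMapFst x y h) = 𝒢.r x := by
  simp [pairMapFst]

theorem s_pairMapSnd (mp : 𝒢.MatchPair H K p₁ p₂) {x y : G} (h : 𝒢.s (p₁ x) = 𝒢.r y) :
    𝒢.s (mp.pairMapSnd x y h) = 𝒢.s y := by
  simp [pairMapSnd]

theorem s_pairMapFst (mp : 𝒢.MatchPair H K p₁ p₂) {x y : G} (h : 𝒢.s (p₁ x) = 𝒢.r y) :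
    𝒢.s (mp.pairMapFst x y h) = 𝒢.s (p₁ (mp.pairMapSnd x y h)) := by
  simp [pairMapFst]

theorem s_p₁_pairMapFst (mp : 𝒢.MatchPair H K p₁ p₂) {x y : G} (h : 𝒢.s (p₁ x) = 𝒢.r y) :
    𝒢.s (p₁ (mp.pairMapFst x y h)) = 𝒢.s (p₁ y) := by
  simp [(mp.p_pairMapFst h).1]

theorem p₂_pairMapFst_mul_p₂_pairMapSnd (mp : 𝒢.MatchPair H K p₁ p₂) {x y : G}
    (h : 𝒢.s (p₁ x) = 𝒢.r y) :
    𝒢.mul (p₂ (mp.pairMapFst x y h)) (p₂ (mp.pairMapSnd x y h))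
      (by rw [mp.s_p₂, mp.s_pairMapFst, mp.r_p₂]) = p₂ y := by
  simp only [(mp.p_pairMapFst h).2, (mp.p_pairMapSnd h).2]
  simp

theorem pairMap_pentagon (mp : 𝒢.MatchPair H K p₁ p₂) {x y z : G}
    (h₁ : 𝒢.s (p₁ x) = 𝒢.r y) (h₂ : 𝒢.s (p₁ y) = 𝒢.r z)
    (h₃ : 𝒢.s (p₁ (mp.pairMapFst x y h₁)) = 𝒢.r z)
    (h₄ : 𝒢.s (p₁ (mp.pairMapSnd x y h₁)) = 𝒢.r (mp.pairMapSnd (mp.pairMapFst x y h₁) z h₃))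
    (h₅ : 𝒢.s (p₁ x) = 𝒢.r (mp.pairMapFst y z h₂)) :
    mp.pairMapFst x (mp.pairMapFst y z h₂) h₅ =
        mp.pairMapFst (mp.pairMapFst x y h₁) z h₃ ∧
      mp.pairMapSnd x (mp.pairMapFst y z h₂) h₅ =
        mp.pairMapFst (mp.pairMapSnd x y h₁) (mp.pairMapSnd (mp.pairMapFst x y h₁) z h₃) h₄ ∧
      mp.pairMapSnd (mp.pairMapSnd x y h₁) (mp.pairMapSnd (mp.pairMapFst x y h₁) z h₃) h₄ =
        mp.pairMapSnd y z h₂ := by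
  have hT : mp.pairMapSnd (mp.pairMapSnd x y h₁) (mp.pairMapSnd (mp.pairMapFst x y h₁) z h₃) h₄
      = mp.pairMapSnd y z h₂ := by
    refine 𝒢.eq_inv_mul_of_mul_eq (h := by rw [mp.s_p₂, mp.r_pairMapSnd, mp.s_pairMapSnd]) ?_ _
    simp only [← mp.p₂_pairMapFst_mul_p₂_pairMapSnd h₁]
    simp [pairMapSnd]
  have hV : mp.pairMapSnd x (mp.pairMapFst y z h₂) h₅ =
      mp.pairMapFst (mp.pairMapSnd x y h₁) (mp.pairMapSnd (mp.pairMapFst x y h₁) z h₃) h₄ := by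
    show 𝒢.mul (𝒢.inv (p₂ x)) (𝒢.mul y (p₁ (mp.pairMapSnd y z h₂)) _) _ =
      𝒢.mul (mp.pairMapSnd x y h₁) (p₁ (mp.pairMapSnd _ _ h₄)) _
    simp only [hT]
    exact (𝒢.mul_assoc' _ _).symm
  refine ⟨?_, hV, hT⟩
  show 𝒢.mul x (p₁ (mp.pairMapSnd x (mp.pairMapFst y z h₂) h₅)) _ =
    𝒢.mul (mp.pairMapFst x y h₁) (p₁ (mp.pairMapSnd _ z h₃)) _
  simp only [hV, (mp.p_pairMapFst h₄).1]
  exact (𝒢.mul_assoc' _ _).symm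

end MatchPair

section Operators

variable {𝒢}

theorem IMP12_apply (mp : 𝒢.MatchPair H K p₁ p₂) (ξ : (G × G × G) → ℂ) {x y : G} (z : G)
    (h : 𝒢.s (p₁ x) = 𝒢.r y) :
    𝒢.IMP12 mp ξ (x, y, z) = ξ (mp.pairMapFst x y h, mp.pairMapSnd x y h, z) :=
  dif_pos h

theorem IMP12_apply_eq_zero (mp : 𝒢.MatchPair H K p₁ p₂) (ξ : (G × G × G) → ℂ) {x y : G}
    (z : G) (h : ¬𝒢.s (p₁ x) = 𝒢.r y) : 𝒢.IMP12 mp ξ (x, y, z) = 0 :=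
  dif_neg h

theorem IMP23_apply (mp : 𝒢.MatchPair H K p₁ p₂) (ξ : (G × G × G) → ℂ) (x : G) {y z : G}
    (h : 𝒢.s (p₁ y) = 𝒢.r z) :
    𝒢.IMP23 mp ξ (x, y, z) = ξ (x, mp.pairMapFst y z h, mp.pairMapSnd y z h) :=
  dif_pos h

theorem IMP23_apply_eq_zero (mp : 𝒢.MatchPair H K p₁ p₂) (ξ : (G × G × G) → ℂ) (x : G)
    {y z : G} (h : ¬𝒢.s (p₁ y) = 𝒢.r z) : 𝒢.IMP23 mp ξ (x, y, z) = 0 :=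
  dif_neg h

theorem IMP13_apply (mp : 𝒢.MatchPair H K p₁ p₂) (ξ : (G × G × G) → ℂ) {x z : G} (y : G)
    (h : 𝒢.s (p₁ x) = 𝒢.r z) :
    𝒢.IMP13 mp ξ (x, y, z) = ξ (mp.pairMapFst x z h, y, mp.pairMapSnd x z h) :=
  dif_pos h

theorem IMP13_apply_eq_zero (mp : 𝒢.MatchPair H K p₁ p₂) (ξ : (G × G × G) → ℂ) {x z : G}
    (y : G) (h : ¬𝒢.s (p₁ x) = 𝒢.r z) : 𝒢.IMP13 mp ξ (x, y, z) = 0 :=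
  dif_neg h

end Operators

theorem stmt15 (mp : 𝒢.MatchPair H K p₁ p₂) :
    ∀ ξ : (G × G × G) → ℂ,
      𝒢.IMP12 mp (𝒢.IMP13 mp (𝒢.IMP23 mp ξ)) = 𝒢.IMP23 mp (𝒢.IMP12 mp ξ) := by
  intro ξ
  funext ⟨x, y, z⟩
  by_cases h₁ : 𝒢.s (p₁ x) = 𝒢.r y
  · by_cases h₂ : 𝒢.s (p₁ y) = 𝒢.r z
    · have h₃ := (mp.s_p₁_pairMapFst h₁).trans h₂
      have h₄ : 𝒢.s (p₁ (mp.pairMapSnd x y h₁)) =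
          𝒢.r (mp.pairMapSnd (mp.pairMapFst x y h₁) z h₃) := by
        rw [mp.r_pairMapSnd, mp.s_pairMapFst]
      have h₅ : 𝒢.s (p₁ x) = 𝒢.r (mp.pairMapFst y z h₂) := by rwa [mp.r_pairMapFst]
      obtain ⟨e₁, e₂, e₃⟩ := mp.pairMap_pentagon h₁ h₂ h₃ h₄ h₅
      rw [IMP12_apply mp _ z h₁, IMP13_apply mp _ _ h₃, IMP23_apply mp ξ _ h₄,
        IMP23_apply mp _ x h₂, IMP12_apply mp ξ _ h₅, e₁, e₂, e₃]
    · have h₃ : ¬𝒢.s (p₁ (mp.pairMapFst x y h₁)) = 𝒢.r z := by rwa [mp.s_p₁_pairMapFst]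
      rw [IMP12_apply mp _ z h₁, IMP13_apply_eq_zero mp _ _ h₃, IMP23_apply_eq_zero mp _ x h₂]
  · rw [IMP12_apply_eq_zero mp _ z h₁]
    by_cases h₂ : 𝒢.s (p₁ y) = 𝒢.r z
    · rw [IMP23_apply mp _ x h₂, IMP12_apply_eq_zero mp ξ _ (by rwa [mp.r_pairMapFst])]
    · rw [IMP23_apply_eq_zero mp _ x h₂]

end

end Gpd
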